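/- There exists a 1-D cellular automaton of radius 1 over alphabet {a, b, c, ⊥} and finite initial configuration c₀ = ⊥^ω a b c ⊥^ω such that G^n(c₀) = ⊥^ω a^{n+1} b^{n+1} c^{n+1} ⊥^ω for all n ≥ 0; hence the generated language is { aⁿ bⁿ cⁿ | n ≥ 1 }, a language that is not context-free. -/

import Mathlib

/-- Global map of a 1-D cellular automaton of radius `r` with local rule `f`. -/
def glob {α : Type*} (r : ℕ) (f : (Fin (2 * r + 1) → α) → α) (c : ℤ → α) : ℤ → α :=
  fun z => f (fun j => c (z + (j.val : ℤ) - (r : ℤ)))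

/-- The finite configuration `⊥^ω w ⊥^ω`, with `w` placed at positions `0, …, |w| - 1`. -/
def padW {α : Type*} (bot : α) (w : List α) : ℤ → α :=
  fun z => if 0 ≤ z ∧ z < (w.length : ℤ) then w.getD z.toNat bot else bot

/-- The alphabet `{a, b, c, ⊥}`. -/
inductive ABC : Type
  | a : ABC
  | b : ABC
  | c : ABC
  | bot : ABC
deriving DecidableEq

/-!
The rule makes `a` grow one cell to the left, `c` two cells to the right, and `b` take over the
leftmost `c`, so `⊥^ω aⁿbⁿcⁿ ⊥^ω` becomes `⊥^ω aⁿ⁺¹bⁿ⁺¹cⁿ⁺¹ ⊥^ω` in one step.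

`{aⁿbⁿcⁿ | n ≥ 1}` is not context-free by the pumping lemma: pumping `x u y v z` once adds the
same positive number of `a`s, `b`s and `c`s, so `u ++ v` contains all three letters; but `u u`
and `v v` are infixes of a sorted word, so `u` and `v` are each constant.
For the pumping lemma, derive every subword with as few rule applications as possible and
search, below each node, for a node carrying the label of an ancestor. If none is found, every
root-to-leaf path has distinct labels, which bounds the length of the word. If one is found, its
context `u _ v` is nonempty by minimality, so it can be pumped.
-/

section padW

variable {α : Type*} {bot : α} {W w : List α}

lemma padW_natCast (i : ℕ) : padW bot W i = W.getD i bot := by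
  unfold padW
  split_ifs with h
  · simp
  · rw [List.getD_eq_default _ _ (by omega)]

lemma padW_ne_iff (hW : bot ∉ W) (z : ℤ) : padW bot W z ≠ bot ↔ 0 ≤ z ∧ z < W.length := by
  unfold padW
  split_ifs with h
  · have hz : z.toNat < W.length := by omega
    simpa [List.getD_eq_getElem _ _ hz, h] using fun he : W[z.toNat] = bot =>
      hW (he ▸ List.getElem_mem hz)
  · simpa using h

lemma List.getElem?_eq_some_iff_getD (hW : bot ∉ W) {i : ℕ} {x : α} :
    W[i]? = some x ↔ W.getD i bot = x ∧ x ≠ bot := by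
  rw [List.getD_eq_getElem?_getD]
  cases h : W[i]? with
  | none => simp only [reduceCtorEq, Option.getD_none, false_iff, not_and_not_right]; exact Eq.symm
  | some y =>
    simp only [Option.some.injEq, Option.getD_some, iff_self_and]
    rintro rfl rfl
    exact hW (List.mem_of_getElem? h)

lemma eq_of_padW_eq_padW_sub (hW : bot ∉ W) (hw : bot ∉ w) (hne : W ≠ []) {t : ℤ}
    (h : ∀ z, padW bot W z = padW bot w (z - t)) : W = w := by
  have hsupp (z : ℤ) : (0 ≤ z ∧ z < W.length) ↔ (0 ≤ z - t ∧ z - t < w.length) := by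
    rw [← padW_ne_iff hW, ← padW_ne_iff hw, h]
  have hW0 : 0 < W.length := List.length_pos_iff.2 hne
  have h0 := (hsupp 0).1 ⟨le_rfl, by omega⟩
  have ht := (hsupp t).2 ⟨by omega, by omega⟩
  obtain rfl : t = 0 := by omega
  refine List.ext_getElem? fun i => Option.ext fun x => ?_
  rw [List.getElem?_eq_some_iff_getD hW, List.getElem?_eq_some_iff_getD hw, ← padW_natCast,
    ← padW_natCast, h, sub_zero]

end padW

namespace ContextFreeGrammar

variable {T : Type*} {g : ContextFreeGrammar T}

/-- `g.Yields ss w n`: a forest of parse trees, one rooted at each symbol of `ss`, with frontier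
`w` and `n` rule applications in total. -/
inductive Yields (g : ContextFreeGrammar T) : List (Symbol T g.NT) → List T → ℕ → Prop
  | nil : g.Yields [] [] 0
  | terminal (t : T) {ss w n} : g.Yields ss w n → g.Yields (.terminal t :: ss) (t :: w) n
  | nonterminal {r : ContextFreeRule T g.NT} (hr : r ∈ g.rules) {ss w₁ w₂ m n} :
      g.Yields r.output w₁ m → g.Yields ss w₂ n →
      g.Yields (.nonterminal r.input :: ss) (w₁ ++ w₂) (m + n + 1)

namespace Yields

lemma append {p q : List (Symbol T g.NT)} {w₁ w₂ : List T} {m n : ℕ}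
    (hp : g.Yields p w₁ m) (hq : g.Yields q w₂ n) : g.Yields (p ++ q) (w₁ ++ w₂) (m + n) := by
  induction hp with
  | nil => simpa using hq
  | terminal t _ ih => exact .terminal t ih
  | @nonterminal _ hr _ _ _ m₁ m₂ h₁ _ _ ih =>
    rw [List.append_assoc, show m₁ + m₂ + 1 + n = m₁ + (m₂ + n) + 1 by omega]
    exact .nonterminal hr h₁ ih

lemma of_append {p q : List (Symbol T g.NT)} {w : List T} {n : ℕ}
    (h : g.Yields (p ++ q) w n) :
    ∃ w₁ w₂ m k, w = w₁ ++ w₂ ∧ n = m + k ∧ g.Yields p w₁ m ∧ g.Yields q w₂ k := by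
  induction p generalizing w n with
  | nil => exact ⟨[], w, 0, n, rfl, by omega, .nil, h⟩
  | cons s p ih =>
    cases h with
    | terminal t h =>
      obtain ⟨w₁, w₂, m, k, rfl, rfl, h₁, h₂⟩ := ih h
      exact ⟨t :: w₁, w₂, m, k, rfl, rfl, .terminal t h₁, h₂⟩
    | @nonterminal _ hr _ w₀ _ m₀ _ hout h =>
      obtain ⟨w₁, w₂, m, k, rfl, rfl, h₁, h₂⟩ := ih h
      exact ⟨w₀ ++ w₁, w₂, m₀ + m + 1, k, by simp, by omega, .nonterminal hr hout h₁, h₂⟩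

lemma derives {ss : List (Symbol T g.NT)} {w : List T} {n : ℕ} (h : g.Yields ss w n) :
    g.Derives ss (w.map .terminal) := by
  induction h with
  | nil => exact .refl _
  | terminal t _ ih => simpa using ih.append_left [.terminal t]
  | @nonterminal r hr ss w₁ w₂ m n _ _ ih₁ ih₂ =>
    have hstep : g.Produces [.nonterminal r.input] r.output :=
      ⟨r, hr, ContextFreeRule.Rewrites.input_output⟩
    simpa using ((hstep.single.trans ih₁).append_right ss).trans (ih₂.append_left _)

lemma of_produces {u v : List (Symbol T g.NT)} {w : List T} {n : ℕ} (huv : g.Produces u v)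
    (h : g.Yields v w n) : g.Yields u w (n + 1) := by
  obtain ⟨r, hr, hrw⟩ := huv
  obtain ⟨p, q, rfl, rfl⟩ := hrw.exists_parts
  obtain ⟨w₁₂, w₃, m₁₂, m₃, rfl, rfl, h₁₂, h₃⟩ := h.of_append
  obtain ⟨w₁, w₂, m₁, m₂, rfl, rfl, h₁, h₂⟩ := h₁₂.of_append
  rw [List.append_assoc, List.append_assoc, show m₁ + m₂ + m₃ + 1 = m₁ + (m₂ + m₃ + 1) by omega]
  exact h₁.append (.nonterminal hr h₂ h₃)

lemma map_terminal (w : List T) : g.Yields (w.map .terminal) w 0 := by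
  induction w with
  | nil => exact .nil
  | cons t w ih => exact .terminal t ih

lemma exists_rule_of_singleton {A : g.NT} {w : List T} {n : ℕ} (h : g.Yields [.nonterminal A] w n) :
    ∃ r ∈ g.rules, r.input = A ∧ ∃ m, n = m + 1 ∧ g.Yields r.output w m := by
  generalize hA : [Symbol.nonterminal A] = ss at h
  cases h with
  | nil => cases hA
  | terminal => cases hA
  | nonterminal hr hout hrest =>
    simp only [List.cons.injEq, Symbol.nonterminal.injEq] at hA
    obtain ⟨rfl, rfl⟩ := hA
    cases hrest
    exact ⟨_, hr, rfl, _, rfl, by simpa using hout⟩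

end Yields

lemma Derives.exists_yields {u : List (Symbol T g.NT)} {w : List T}
    (h : g.Derives u (w.map .terminal)) : ∃ n, g.Yields u w n := by
  induction h using Relation.ReflTransGen.head_induction_on with
  | refl => exact ⟨0, .map_terminal w⟩
  | head huv _ ih =>
    obtain ⟨n, hn⟩ := ih
    exact ⟨n + 1, hn.of_produces huv⟩

/-- A node labelled `B`, with frontier `y` satisfying `P B y`, in a parse of `w` from `ss`. -/
def HasNode (g : ContextFreeGrammar T) (P : g.NT → List T → Prop) (ss : List (Symbol T g.NT))
    (w : List T) : Prop :=
  ∃ (B : g.NT) (x y z : List T), w = x ++ y ++ z ∧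
    g.Derives ss (x.map .terminal ++ [.nonterminal B] ++ z.map .terminal) ∧ P B y

def Pumps (g : ContextFreeGrammar T) (B : g.NT) (y : List T) : Prop :=
  ∃ u y' v : List T, y = u ++ y' ++ v ∧ u ++ v ≠ [] ∧
    g.Derives [.nonterminal B] (u.map .terminal ++ [.nonterminal B] ++ v.map .terminal) ∧
    g.Derives [.nonterminal B] (y'.map .terminal)

def YieldsBelow (g : ContextFreeGrammar T) (S : Finset g.NT) (n : ℕ) (C : g.NT) (y : List T) :
    Prop :=
  C ∈ S ∧ ∃ m < n, g.Yields [.nonterminal C] y m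

namespace HasNode

variable {P Q : g.NT → List T → Prop}

lemma self {B : g.NT} {y : List T} (h : P B y) : g.HasNode P [.nonterminal B] y :=
  ⟨B, [], y, [], by simp, by simpa using .refl _, h⟩

lemma mono {ss : List (Symbol T g.NT)} {w : List T} (h : g.HasNode P ss w)
    (hPQ : ∀ B y, P B y → Q B y) : g.HasNode Q ss w := by
  obtain ⟨B, x, y, z, hw, hd, hP⟩ := h
  exact ⟨B, x, y, z, hw, hd, hPQ B y hP⟩

lemma of_derives {ss ss' : List (Symbol T g.NT)} {w : List T} (hss : g.Derives ss ss')
    (h : g.HasNode P ss' w) : g.HasNode P ss w := by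
  obtain ⟨B, x, y, z, hw, hd, hP⟩ := h
  exact ⟨B, x, y, z, hw, hss.trans hd, hP⟩

lemma append_left {p q : List (Symbol T g.NT)} {w₀ w : List T}
    (hp : g.Derives p (w₀.map .terminal)) (h : g.HasNode P q w) :
    g.HasNode P (p ++ q) (w₀ ++ w) := by
  obtain ⟨B, x, y, z, rfl, hd, hP⟩ := h
  refine ⟨B, w₀ ++ x, y, z, by simp, ?_, hP⟩
  simpa using (hp.append_right q).trans (hd.append_left _)

lemma append_right {p q : List (Symbol T g.NT)} {w w₀ : List T} (h : g.HasNode P p w)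
    (hq : g.Derives q (w₀.map .terminal)) : g.HasNode P (p ++ q) (w ++ w₀) := by
  obtain ⟨B, x, y, z, rfl, hd, hP⟩ := h
  refine ⟨B, x, y, z ++ w₀, by simp, ?_, hP⟩
  simpa using (hd.append_right q).trans (hq.append_left _)

end HasNode

lemma Derives.append_sides {u v : List (Symbol T g.NT)} (h : g.Derives u v)
    (p q : List (Symbol T g.NT)) : g.Derives (p ++ u ++ q) (p ++ v ++ q) := by
  simpa only [List.append_assoc] using (h.append_right q).append_left p

lemma derives_iterate_loop {B : g.NT} {u v : List T}
    (h : g.Derives [.nonterminal B] (u.map .terminal ++ [.nonterminal B] ++ v.map .terminal))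
    (i : ℕ) :
    g.Derives [.nonterminal B] ((List.replicate i u).flatten.map .terminal ++ [.nonterminal B] ++
      (List.replicate i v).flatten.map .terminal) := by
  induction i with
  | zero => simpa using .refl _
  | succ i ih =>
    rw [List.replicate_succ, List.replicate_succ']
    simpa using h.trans (ih.append_sides _ _)

lemma HasNode.pump {ss : List (Symbol T g.NT)} {w : List T} (h : g.HasNode g.Pumps ss w) :
    ∃ x u y v z : List T, w = x ++ u ++ y ++ v ++ z ∧ u ++ v ≠ [] ∧ ∀ i,
      g.Derives ss ((x ++ (List.replicate i u).flatten ++ y ++ (List.replicate i v).flatten ++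
        z).map .terminal) := by
  obtain ⟨B, x, _, z, rfl, hctx, u, y, v, rfl, huv, hloop, hy⟩ := h
  refine ⟨x, u, y, v, z, by simp, huv, fun i => ?_⟩
  have hmid := (derives_iterate_loop hloop i).trans (hy.append_sides _ _)
  simpa using hctx.trans (hmid.append_sides _ _)

open scoped Classical in
/-- The labels of inner parse-tree nodes (`g.NT` itself may be infinite). -/
noncomputable def inputs (g : ContextFreeGrammar T) : Finset g.NT :=
  g.rules.image ContextFreeRule.input

open scoped Classical in
lemma card_inputs_sdiff_insert {r : ContextFreeRule T g.NT} (hr : r ∈ g.rules)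
    {S : Finset g.NT} (hS : r.input ∉ S) :
    (g.inputs \ insert r.input S).card + 1 = (g.inputs \ S).card := by
  have hmem : r.input ∈ g.inputs \ S := Finset.mem_sdiff.2 ⟨Finset.mem_image_of_mem _ hr, hS⟩
  rw [Finset.sdiff_insert, Finset.card_erase_of_mem hmem,
    Nat.sub_add_cancel (Finset.card_pos.2 ⟨_, hmem⟩)]

def Trichotomy (g : ContextFreeGrammar T) (S : Finset g.NT) (n L : ℕ)
    (ss : List (Symbol T g.NT)) (w : List T) : Prop :=
  g.HasNode g.Pumps ss w ∨ g.HasNode (g.YieldsBelow S n) ss w ∨ w.length ≤ L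

lemma Trichotomy.mono {S : Finset g.NT} {m n L : ℕ} {ss : List (Symbol T g.NT)} {w : List T}
    (h : g.Trichotomy S m L ss w) (hmn : m ≤ n) : g.Trichotomy S n L ss w := by
  rcases h with hP | hR | hl
  · exact .inl hP
  · exact .inr (.inl (hR.mono fun _ _ ⟨hC, k, hk, hy⟩ => ⟨hC, k, by omega, hy⟩))
  · exact .inr (.inr hl)

def IsMinYields (g : ContextFreeGrammar T) (A : g.NT) (w : List T) (n : ℕ) : Prop :=
  g.Yields [.nonterminal A] w n ∧ ∀ k < n, ¬ g.Yields [.nonterminal A] w k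

section Search

variable {S : Finset g.NT} {n L : ℕ}

lemma trichotomy_nonterminal
    (ih : ∀ m < n, ∀ A w, A ∉ S → g.IsMinYields A w m → g.Trichotomy S m L [.nonterminal A] w)
    {B : g.NT} {y : List T} {k : ℕ} (h : g.Yields [.nonterminal B] y k) (hk : k < n) :
    g.Trichotomy S n L [.nonterminal B] y := by
  classical
  by_cases hB : B ∈ S
  · exact .inr (.inl (.self ⟨hB, k, hk, h⟩))
  have hex : ∃ k, g.Yields [.nonterminal B] y k := ⟨k, h⟩
  have hmin : Nat.find hex ≤ k := Nat.find_min' hex h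
  exact (ih _ (by omega) B y hB ⟨Nat.find_spec hex, fun j hj => Nat.find_min hex hj⟩).mono
    (by omega)

lemma trichotomy_forest
    (ih : ∀ m < n, ∀ A w, A ∉ S → g.IsMinYields A w m → g.Trichotomy S m L [.nonterminal A] w)
    (hL : 1 ≤ L) {ss : List (Symbol T g.NT)} {w : List T} {m : ℕ}
    (h : g.Yields ss w m) (hm : m < n) : g.Trichotomy S n (ss.length * L) ss w := by
  induction h with
  | nil => exact .inr (.inr (by simp))
  | terminal t h ih' =>
    have hterm : g.Derives [.terminal t] ([t].map .terminal) := .refl _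
    rcases ih' hm with hP | hR | hl
    · exact .inl (hP.append_left hterm)
    · exact .inr (.inl (hR.append_left hterm))
    · exact .inr (.inr (by simp; nlinarith))
  | @nonterminal r hr ss w₁ w₂ m₁ m₂ hout hrest _ ihrest =>
    have hchild : g.Yields [.nonterminal r.input] w₁ (m₁ + 0 + 1) := by
      simpa using Yields.nonterminal hr hout .nil
    rcases trichotomy_nonterminal ih hchild (by omega) with hP | hR | hl
    · exact .inl (hP.append_right hrest.derives)
    · exact .inr (.inl (hR.append_right hrest.derives))
    rcases ihrest (by omega) with hP | hR | hl'
    · exact .inl (hP.append_left hchild.derives)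
    · exact .inr (.inl (hR.append_left hchild.derives))
    · exact .inr (.inr (by simp; nlinarith))

end Search

open scoped Classical in
/-- `S` collects the labels of the ancestors of `A`; each level of the recursion adds one and
multiplies the length bound by `K`. -/
lemma trichotomy_of_isMinYields {K : ℕ} (hK : 1 ≤ K) (hout : ∀ r ∈ g.rules, r.output.length ≤ K)
    (n : ℕ) : ∀ (S : Finset g.NT) (A : g.NT) (w : List T), A ∉ S → g.IsMinYields A w n →
      g.Trichotomy S n (K ^ (g.inputs \ S).card) [.nonterminal A] w := by
  induction n using Nat.strong_induction_on with
  | _ n IH =>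
  intro S A w hAS ⟨hw, hmin⟩
  obtain ⟨r, hr, rfl, m, rfl, hw'⟩ := hw.exists_rule_of_singleton
  have hstep : g.Derives [.nonterminal r.input] r.output :=
    Produces.single ⟨r, hr, ContextFreeRule.Rewrites.input_output⟩
  have hcard := card_inputs_sdiff_insert hr hAS
  rcases trichotomy_forest (fun k hk => IH k hk _) (Nat.one_le_pow _ _ hK) hw'
    (Nat.lt_succ_self m) with hP | hR | hl
  · exact .inl (hP.of_derives hstep)
  · obtain ⟨C, x, y, z, rfl, hctx, hC, k, hk, hy⟩ := hR
    rcases Finset.mem_insert.1 hC with rfl | hCS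
    -- a node labelled `A` below `A`: it pumps, unless its context is empty and its derivation
    -- beats the minimal one
    · by_cases hxz : x = [] ∧ z = []
      · obtain ⟨rfl, rfl⟩ := hxz
        exact absurd (by simpa using hy) (hmin k hk)
      · refine .inl (.self ⟨x, y, z, rfl, ?_, hstep.trans hctx, hy.derives⟩)
        simpa [List.append_eq_nil_iff] using hxz
    · exact .inr (.inl ⟨C, x, y, z, rfl, hstep.trans hctx, hCS, k, hk, hy⟩)
  · refine .inr (.inr (hl.trans ?_))
    calc r.output.length * K ^ (g.inputs \ insert r.input S).card
        ≤ K * K ^ (g.inputs \ insert r.input S).card := Nat.mul_le_mul_right _ (hout r hr)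
      _ = K ^ (g.inputs \ S).card := by rw [← hcard, pow_succ, mul_comm]

theorem exists_pumping_length (g : ContextFreeGrammar T) :
    ∃ p : ℕ, ∀ w ∈ g.language, p < w.length → ∃ x u y v z : List T,
      w = x ++ u ++ y ++ v ++ z ∧ u ++ v ≠ [] ∧
      ∀ i, x ++ (List.replicate i u).flatten ++ y ++ (List.replicate i v).flatten ++ z ∈
        g.language := by
  classical
  obtain ⟨K, hK, hout⟩ : ∃ K, 1 ≤ K ∧ ∀ r ∈ g.rules, r.output.length ≤ K :=
    ⟨max 1 (g.rules.sup fun r => r.output.length), le_max_left _ _,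
      fun r hr => (Finset.le_sup (f := fun r => r.output.length) hr).trans (le_max_right _ _)⟩
  refine ⟨K ^ g.inputs.card, fun w hw hlong => ?_⟩
  have hex := ((mem_language_iff g w).1 hw).exists_yields
  have hminY : g.IsMinYields g.initial w (Nat.find hex) :=
    ⟨Nat.find_spec hex, fun k hk => Nat.find_min hex hk⟩
  rcases trichotomy_of_isMinYields hK hout _ ∅ _ w (Finset.notMem_empty _)
    hminY with hP | ⟨_, _, _, _, _, _, hC, _⟩ | hl
  · exact hP.pump
  · exact absurd hC (Finset.notMem_empty _)
  · rw [Finset.sdiff_empty] at hl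
    omega

end ContextFreeGrammar

namespace ABC

def word (n : ℕ) : List ABC := .replicate n a ++ .replicate n b ++ .replicate n c

def wordAt (n : ℕ) (z : ℤ) : ABC :=
  if z < 0 then bot else if z < n then a else if z < 2 * n then b
  else if z < 3 * n then c else bot

lemma padW_word (n : ℕ) : padW bot (word n) = wordAt n := by
  funext z
  unfold padW word wordAt
  simp only [List.length_append, List.length_replicate, List.getD_eq_getElem?_getD,
    List.getElem?_append, List.getElem?_replicate]
  split_ifs <;> first | rfl | omega

def growRule (v : Fin 5 → ABC) : ABC :=
  match v 2 with
  | a => a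
  | b => b
  | c => if v 1 = b then b else c
  | bot => if v 3 = a then a else if v 1 = c ∨ v 0 = c then c else bot

lemma growRule_wordAt {n : ℕ} (hn : 1 ≤ n) (p : ℤ) :
    growRule (fun j => wordAt n (p + j - 2)) = wordAt (n + 1) (p + 1) := by
  simp only [growRule, wordAt, Fin.isValue, Fin.val_zero, Fin.val_one, Fin.val_two]
  push_cast
  obtain h | h | h | h | h | h | h | h | h : p < -1 ∨ p = -1 ∨ (0 ≤ p ∧ p < n) ∨
      (n ≤ p ∧ p < 2 * n) ∨ p = 2 * n ∨ (2 * n < p ∧ p < 3 * n) ∨ p = 3 * n ∨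
      p = 3 * n + 1 ∨ 3 * n + 2 ≤ p := by omega
  all_goals simp (disch := omega) only [if_pos, if_neg, reduceCtorEq, or_self, false_or,
    true_or, ite_true, ite_false]

lemma iterate_glob_growRule (n : ℕ) :
    (glob 2 growRule)^[n] (padW bot [a, b, c]) = fun z => wordAt (n + 1) (z + n) := by
  induction n with
  | zero => simp [← padW_word, word]
  | succ n ih =>
    funext z
    rw [Function.iterate_succ_apply', ih]
    calc glob 2 growRule (fun z => wordAt (n + 1) (z + n)) z
        = growRule (fun j => wordAt (n + 1) (z + n + j - 2)) := by
          simp only [glob]; congr 1; funext j; ring_nf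
      _ = wordAt (n + 1 + 1) (z + (n + 1 : ℕ)) := by
          rw [growRule_wordAt (by omega)]; push_cast; ring_nf

def rank : ABC → ℕ
  | a => 0
  | b => 1
  | c => 2
  | bot => 3

lemma length_word (n : ℕ) : (word n).length = 3 * n := by
  simp [word]; ring

lemma count_word {l : ABC} (hl : l ≠ bot) (n : ℕ) : (word n).count l = n := by
  cases l <;> simp_all [word, List.count_replicate]

lemma pairwise_word (n : ℕ) : (word n).Pairwise (rank · ≤ rank ·) := by
  simp [word, List.pairwise_append, List.pairwise_replicate, List.mem_replicate, rank]

lemma bot_notMem_word (n : ℕ) : bot ∉ word n := by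
  simp [word, List.mem_replicate]

lemma eq_nil_of_word_pump {x u y v z : List ABC} {n m : ℕ}
    (hw : word n = x ++ u ++ y ++ v ++ z) (hm : x ++ (u ++ u) ++ y ++ (v ++ v) ++ z = word m) :
    u ++ v = [] := by
  by_contra huv
  have hcount (l : ABC) (hl : l ≠ bot) : m = n + (u.count l + v.count l) := by
    have h₁ := congrArg (List.count l) hw
    have h₂ := congrArg (List.count l) hm
    simp only [List.count_append, count_word hl] at h₁ h₂
    omega
  have hnm : n < m := by
    have h₁ := congrArg List.length hw
    have h₂ := congrArg List.length hm
    have h₃ := List.length_pos_iff.2 huv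
    simp only [List.length_append, length_word] at h₁ h₂ h₃
    omega
  have hmem (l : ABC) (hl : l ≠ bot) : l ∈ u ∨ l ∈ v := by
    have := hcount l hl
    rcases Nat.eq_zero_or_pos (u.count l) with h | h
    · exact .inr (List.count_pos_iff.1 (by omega))
    · exact .inl (List.count_pos_iff.1 h)
  have hsorted : (u ++ u ++ (v ++ v)).Pairwise (rank · ≤ rank ·) := by
    have hsub := ((List.sublist_append_right x (u ++ u)).trans
      (List.sublist_append_left _ y)).append (List.sublist_append_left (v ++ v) z)
    refine (pairwise_word m).sublist ?_
    rw [← hm]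
    simpa only [List.append_assoc] using hsub
  simp only [List.pairwise_append, List.mem_append, or_self] at hsorted
  obtain ⟨⟨-, -, hu⟩, ⟨-, -, hv⟩, huv⟩ := hsorted
  rcases hmem b (by decide) with hb | hb
  · rcases hmem a (by decide) with ha | ha
    · exact absurd (hu b hb a ha) (by decide)
    · exact absurd (huv b hb a ha) (by decide)
  · rcases hmem c (by decide) with hc | hc
    · exact absurd (huv c hc b hb) (by decide)
    · exact absurd (hv c hc b hb) (by decide)

theorem not_exists_contextFreeGrammar_language :
    ¬ ∃ g : ContextFreeGrammar ABC, ∀ w, w ∈ g.language ↔ ∃ n, 1 ≤ n ∧ w = word n := by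
  rintro ⟨g, hg⟩
  obtain ⟨p, hp⟩ := g.exists_pumping_length
  obtain ⟨x, u, y, v, z, hw, huv, hpump⟩ :=
    hp (word (p + 1)) ((hg _).2 ⟨p + 1, by omega, rfl⟩) (by rw [length_word]; omega)
  obtain ⟨m, -, hm⟩ := (hg _).1 (hpump 2)
  simp only [List.replicate_succ, List.replicate_zero, List.flatten_cons, List.flatten_nil,
    List.append_nil] at hm
  exact huv (eq_nil_of_word_pump hw hm)

lemma exists_iterate_eq_padW_iff {w : List ABC} :
    (bot ∉ w ∧ ∃ (n : ℕ) (s : ℤ), ∀ z : ℤ,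
        (glob 2 growRule)^[n] (padW bot [a, b, c]) z = padW bot w (z - s)) ↔
      ∃ n, 1 ≤ n ∧ w = word n := by
  constructor
  · rintro ⟨hw, n, s, h⟩
    refine ⟨n + 1, by omega, (eq_of_padW_eq_padW_sub (bot_notMem_word _) hw
      (by simp [word]) (t := s + n) fun z => ?_).symm⟩
    simpa [iterate_glob_growRule, ← padW_word, sub_sub, add_comm] using h (z - n)
  · rintro ⟨n, hn, rfl⟩
    obtain ⟨k, rfl⟩ : ∃ k, n = k + 1 := ⟨n - 1, by omega⟩
    exact ⟨bot_notMem_word _, k, -k, fun z => by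
      rw [iterate_glob_growRule, ← padW_word, sub_neg_eq_add]⟩

end ABC

/-- There is a 1-D CA (some radius `r` and local rule `f`, with quiescent `⊥`) such that from
`c₀ = ⊥^ω a b c ⊥^ω` one has `G^n(c₀) = ⊥^ω a^{n+1} b^{n+1} c^{n+1} ⊥^ω` (up to position
shift) for all `n ≥ 0`; hence the generated language (of `⊥`-free words, up to shift) is
`{aⁿ bⁿ cⁿ | n ≥ 1}`, a language that is not context-free. -/
theorem stmt10 :
    (∃ (r : ℕ) (f : (Fin (2 * r + 1) → ABC) → ABC),
      f (fun _ => ABC.bot) = ABC.bot ∧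
      (∀ n : ℕ, ∃ s : ℤ, ∀ z : ℤ,
        (glob r f)^[n] (padW ABC.bot [ABC.a, ABC.b, ABC.c]) z =
          padW ABC.bot (List.replicate (n + 1) ABC.a ++ List.replicate (n + 1) ABC.b
            ++ List.replicate (n + 1) ABC.c) (z - s)) ∧
      ({ w : List ABC | ABC.bot ∉ w ∧
          ∃ (n : ℕ) (s : ℤ), ∀ z : ℤ,
            (glob r f)^[n] (padW ABC.bot [ABC.a, ABC.b, ABC.c]) z = padW ABC.bot w (z - s) }
        = { w : List ABC | ∃ n : ℕ, 1 ≤ n ∧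
            w = List.replicate n ABC.a ++ List.replicate n ABC.b
              ++ List.replicate n ABC.c })) ∧
    ¬ ∃ g : ContextFreeGrammar ABC,
        ∀ w : List ABC, w ∈ g.language ↔
          ∃ n : ℕ, 1 ≤ n ∧
            w = List.replicate n ABC.a ++ List.replicate n ABC.b
              ++ List.replicate n ABC.c := by
  refine ⟨⟨2, ABC.growRule, rfl, fun n => ⟨-n, fun z => ?_⟩, Set.ext fun w => ABC.exists_iterate_eq_padW_iff⟩,
    ABC.not_exists_contextFreeGrammar_language⟩
  rw [ABC.iterate_glob_growRule, ← ABC.padW_word, sub_neg_eq_add]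
  rfl
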